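/- The identity of formal power series in q, x, y: \sum_{m,n \geq 0} q^{m^2+n^2-mn} x^m y^n / ((q)_m (q)_n) = \sum_{n_1,n_2,n_3 \geq 0} x^{n_1+n_2} y^{n_2+n_3} q^{n_1^2+n_2^2+n_3^2+n_1 n_2 + n_2 n_3} / ((q)_{n_1}(q)_{n_2}(q)_{n_3}). -/

import Mathlib

/-!
The finite identity `∑_{k ≤ min m n} q^{(m-k)(n-k)} [m k]_q [n k]_q (q)_k = 1` (at `q = Q⁻¹` it
counts the `m × n` matrices over `𝔽_Q` by rank) follows by induction on `m`, the inductive step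
telescoping. Multiplying the `(m, n)` term of the left-hand side by it splits that term into the
right-hand terms with `(n₁, n₂, n₃) = (m - k, k, n - k)`, since
`m² + n² - mn + n₁n₃ = n₁² + n₂² + n₃² + n₁n₂ + n₂n₃` and
`[m k]_q [n k]_q (q)_k / ((q)_m (q)_n) = 1 / ((q)_{n₁} (q)_{n₂} (q)_{n₃})`.
These are exactly the right-hand terms of `x`-degree `m` and `y`-degree `n`, and the right-hand
sum may be regrouped by these degrees because each coefficient sees only finitely many terms.
-/

open MvPowerSeries

/-- Coefficientwise (product) topology on trivariate formal power series, with
discrete-like convergence of coefficients.  Infinite sums of power series whose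
orders go to infinity converge in this topology. -/
noncomputable instance : TopologicalSpace (MvPowerSeries (Fin 3) ℚ) :=
  inferInstanceAs (TopologicalSpace ((Fin 3 →₀ ℕ) → ℚ))

/-- `q`, `x`, `y` as formal variables. -/
noncomputable def q : MvPowerSeries (Fin 3) ℚ := X 0
noncomputable def x : MvPowerSeries (Fin 3) ℚ := X 1
noncomputable def y : MvPowerSeries (Fin 3) ℚ := X 2

/-- The q-Pochhammer symbol `(q;q)_k`. -/
noncomputable def qPoch (k : ℕ) : MvPowerSeries (Fin 3) ℚ :=
  ∏ i ∈ Finset.range k, (1 - q ^ (i + 1))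

open Finset

section QAnalogues

variable {R S : Type*} [CommRing R] [CommRing S] (q : R)

def qPochhammer (k : ℕ) : R := ∏ i ∈ range k, (1 - q ^ (i + 1))

@[simp]
theorem qPochhammer_zero : qPochhammer q 0 = 1 := prod_range_zero _

theorem qPochhammer_succ (k : ℕ) : qPochhammer q (k + 1) = qPochhammer q k * (1 - q ^ (k + 1)) :=
  prod_range_succ _ _

theorem map_qPochhammer (f : R →+* S) (k : ℕ) : f (qPochhammer q k) = qPochhammer (f q) k := by
  simp [qPochhammer, map_prod]

@[simp]
theorem qPochhammer_zero_left (k : ℕ) : qPochhammer (0 : R) k = 1 := by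
  simp [qPochhammer]

def qBinomial : ℕ → ℕ → R
  | _, 0 => 1
  | 0, _ + 1 => 0
  | n + 1, k + 1 => qBinomial n (k + 1) + q ^ (n - k) * qBinomial n k

@[simp]
theorem qBinomial_zero_right (n : ℕ) : qBinomial q n 0 = 1 := by cases n <;> rfl

@[simp]
theorem qBinomial_zero_succ (k : ℕ) : qBinomial q 0 (k + 1) = 0 := rfl

theorem qBinomial_succ_succ (n k : ℕ) :
    qBinomial q (n + 1) (k + 1) = qBinomial q n (k + 1) + q ^ (n - k) * qBinomial q n k := rfl

theorem qBinomial_eq_zero_of_lt {n k : ℕ} (h : n < k) : qBinomial q n k = 0 := by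
  induction n generalizing k with
  | zero => obtain ⟨k, rfl⟩ := Nat.exists_eq_add_one.mpr h; rfl
  | succ n ih =>
    obtain ⟨k, rfl⟩ := Nat.exists_eq_add_one.mpr (Nat.zero_lt_of_lt h)
    rw [qBinomial_succ_succ, ih (by omega), ih (by omega), mul_zero, add_zero]

/-- For `n ≤ k` both sides vanish, `n - k` being truncated to `0`. -/
theorem one_sub_pow_mul_qBinomial_succ (n k : ℕ) :
    (1 - q ^ (k + 1)) * qBinomial q n (k + 1) = (1 - q ^ (n - k)) * qBinomial q n k := by
  induction n generalizing k with
  | zero => simp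
  | succ n ih =>
    rcases k with _ | j
    · have h0 := ih 0
      simp only [qBinomial_succ_succ, qBinomial_zero_right, Nat.sub_zero] at h0 ⊢
      linear_combination h0
    · rw [qBinomial_succ_succ, qBinomial_succ_succ]
      rcases lt_or_ge j n with hj | hj
      · obtain ⟨c, rfl⟩ := Nat.exists_eq_add_of_lt hj
        have e1 : j + c + 1 - (j + 1) = c := by omega
        have e2 : j + c + 1 + 1 - (j + 1) = c + 1 := by omega
        have e3 : j + c + 1 - j = c + 1 := by omega
        have h1 := ih (j + 1)
        have h0 := ih j
        rw [e1] at h1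
        rw [e3] at h0
        rw [e1, e2, e3]
        linear_combination h1 + q ^ (c + 1) * h0
      · have e1 : n - (j + 1) = 0 := by omega
        have e2 : n + 1 - (j + 1) = 0 := by omega
        rw [e1, e2, qBinomial_eq_zero_of_lt q (by omega : n < j + 1 + 1),
          qBinomial_eq_zero_of_lt q (by omega : n < j + 1)]
        ring

theorem qBinomial_mul_qPochhammer_mul_qPochhammer (k a : ℕ) :
    qBinomial q (k + a) k * qPochhammer q k * qPochhammer q a = qPochhammer q (k + a) := by
  induction k generalizing a with
  | zero => simp
  | succ k ih =>
    have absorb := one_sub_pow_mul_qBinomial_succ q (k + 1 + a) k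
    rw [show k + 1 + a - k = a + 1 by omega] at absorb
    rw [show k + 1 + a = k + (a + 1) by omega] at absorb ⊢
    have ih' := ih (a + 1)
    rw [qPochhammer_succ q a] at ih'
    rw [qPochhammer_succ q k]
    linear_combination qPochhammer q k * qPochhammer q a * absorb + ih'

def qRankCount (m n k : ℕ) : R :=
  q ^ ((m - k) * (n - k)) * (qBinomial q m k * qBinomial q n k * qPochhammer q k)

theorem qRankCount_comm (m n k : ℕ) : qRankCount q m n k = qRankCount q n m k := by
  simp only [qRankCount, Nat.mul_comm (m - k)]
  ring

theorem qRankCount_succ_succ {m n k : ℕ} (hk : k ≤ m) (hmn : m < n) :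
    qRankCount q (m + 1) n (k + 1) =
      q ^ (n - (k + 1)) * qRankCount q m n (k + 1) + (1 - q ^ (n - k)) * qRankCount q m n k := by
  have absorb := one_sub_pow_mul_qBinomial_succ q n k
  obtain ⟨e, rfl⟩ : ∃ e, n = k + 1 + e := ⟨n - (k + 1), by omega⟩
  simp only [qRankCount, qBinomial_succ_succ, qPochhammer_succ]
  rcases hk.lt_or_eq with hk | rfl
  · obtain ⟨d, rfl⟩ : ∃ d, m = k + 1 + d := ⟨m - (k + 1), by omega⟩
    have e1 : k + 1 + d - k = d + 1 := by omega
    have e2 : k + 1 + e - k = e + 1 := by omega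
    have e3 : k + 1 + d + 1 - (k + 1) = d + 1 := by omega
    simp only [e1, e2, e3, Nat.add_sub_cancel_left] at absorb ⊢
    linear_combination q ^ ((d + 1) * e) * q ^ (d + 1) * qBinomial q (k + 1 + d) k *
      qPochhammer q k * absorb
  · have e2 : k + 1 + e - k = e + 1 := by omega
    simp only [e2, Nat.sub_self, qBinomial_eq_zero_of_lt q (Nat.lt_succ_self k)] at absorb ⊢
    linear_combination qBinomial q k k * qPochhammer q k * absorb

theorem sum_range_qRankCount {m n : ℕ} (h : m ≤ n) :
    ∑ k ∈ range (m + 1), qRankCount q m n k = 1 := by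
  induction m with
  | zero => simp [qRankCount]
  | succ m ih =>
    set g : ℕ → R := fun k ↦ q ^ (n - k) * qRankCount q m n k with hg
    have step : ∀ k ∈ range (m + 1),
        qRankCount q (m + 1) n (k + 1) = (g (k + 1) - g k) + qRankCount q m n k := by
      intro k hk
      rw [qRankCount_succ_succ q (Finset.mem_range_succ_iff.mp hk) h]
      ring
    have g_last : g (m + 1) = 0 := by
      simp [hg, qRankCount, qBinomial_eq_zero_of_lt q (Nat.lt_succ_self m)]
    rw [sum_range_succ', sum_congr rfl step, sum_add_distrib, sum_range_sub, ih (by omega),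
      g_last]
    simp only [hg, qRankCount, qBinomial_zero_right, qPochhammer_zero, Nat.sub_zero]
    ring

theorem sum_range_min_qRankCount (m n : ℕ) :
    ∑ k ∈ range (min m n + 1), qRankCount q m n k = 1 := by
  rcases le_total m n with h | h
  · rw [min_eq_left h, sum_range_qRankCount q h]
  · simp only [min_eq_right h, qRankCount_comm q m, sum_range_qRankCount q h]

end QAnalogues

namespace MvPowerSeries

variable {σ R K : Type*}

theorem mul_inv_eq_inv_of_eq_mul [Field K] {u v c : MvPowerSeries σ K}
    (hu : constantCoeff u ≠ 0) (h : u = c * v) : c * u⁻¹ = v⁻¹ := by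
  have hv : constantCoeff v ≠ 0 := by
    rw [h, map_mul] at hu
    exact right_ne_zero_of_mul hu
  rw [MvPowerSeries.eq_inv_iff_mul_eq_one hv, mul_right_comm, ← h,
    MvPowerSeries.mul_inv_cancel u hu]

open scoped WithPiTopology in
theorem summable_monomial_mul [Semiring R] [TopologicalSpace R] {ι : Type*}
    {e : ι → σ →₀ ℕ} (he : ∀ d, {i | e i ≤ d}.Finite) (c : ι → MvPowerSeries σ R) :
    Summable fun i ↦ monomial (e i) 1 * c i := by
  rw [WithPiTopology.summable_iff_summable_coeff]
  intro d
  apply summable_of_hasFiniteSupport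
  refine (he d).subset fun i hi ↦ ?_
  by_contra h
  exact hi (by simp [coeff_monomial_mul, show ¬e i ≤ d from h])

end MvPowerSeries

theorem Summable.tsum_fiberwise {α β γ : Type*} [AddCommMonoid α] [TopologicalSpace α]
    [ContinuousAdd α] [T3Space α] {f : β → α} (hf : Summable f) (g : β → γ)
    (hg : ∀ c, Finite {b // g b = c}) : ∑' b, f b = ∑' (c) (b : {b // g b = c}), f b := by
  rw [← (Equiv.sigmaFiberEquiv g).tsum_eq]
  exact Summable.tsum_sigma' (fun _ ↦ Summable.of_finite)
    ((Equiv.sigmaFiberEquiv g).summable_iff.mpr hf)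

instance : T3Space (MvPowerSeries (Fin 3) ℚ) := inferInstanceAs (T3Space ((Fin 3 →₀ ℕ) → ℚ))

instance : ContinuousAdd (MvPowerSeries (Fin 3) ℚ) :=
  inferInstanceAs (ContinuousAdd ((Fin 3 →₀ ℕ) → ℚ))

theorem qPoch_eq_qPochhammer (k : ℕ) : qPoch k = qPochhammer q k := rfl

theorem constantCoeff_qPoch (k : ℕ) : constantCoeff (qPoch k) = 1 := by
  simp [qPoch_eq_qPochhammer, map_qPochhammer, q]

noncomputable def lhsTerm (p : ℕ × ℕ) : MvPowerSeries (Fin 3) ℚ :=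
  q ^ (p.1 ^ 2 + p.2 ^ 2 - p.1 * p.2) * x ^ p.1 * y ^ p.2 * (qPoch p.1 * qPoch p.2)⁻¹

noncomputable def rhsTerm (t : ℕ × ℕ × ℕ) : MvPowerSeries (Fin 3) ℚ :=
  x ^ (t.1 + t.2.1) * y ^ (t.2.1 + t.2.2) *
    q ^ (t.1 ^ 2 + t.2.1 ^ 2 + t.2.2 ^ 2 + t.1 * t.2.1 + t.2.1 * t.2.2) *
    (qPoch t.1 * qPoch t.2.1 * qPoch t.2.2)⁻¹

theorem lhsTerm_mul_qRankCount (k a b : ℕ) :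
    lhsTerm (k + a, k + b) * qRankCount q (k + a) (k + b) k = rhsTerm (a, k, b) := by
  have hinv : qBinomial q (k + a) k * qBinomial q (k + b) k * qPoch k *
      (qPoch (k + a) * qPoch (k + b))⁻¹ = (qPoch a * qPoch k * qPoch b)⁻¹ := by
    apply MvPowerSeries.mul_inv_eq_inv_of_eq_mul (by simp [constantCoeff_qPoch])
    simp only [qPoch_eq_qPochhammer, ← qBinomial_mul_qPochhammer_mul_qPochhammer q k]
    ring
  have hexp : (k + a) ^ 2 + (k + b) ^ 2 - (k + a) * (k + b) + a * b =
      a ^ 2 + k ^ 2 + b ^ 2 + a * k + k * b := by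
    have hle : (k + a) * (k + b) ≤ (k + a) ^ 2 + (k + b) ^ 2 := by nlinarith
    zify [hle]
    ring
  simp only [lhsTerm, rhsTerm, qRankCount, ← qPoch_eq_qPochhammer, Nat.add_sub_cancel_left,
    ← hinv, ← hexp, pow_add]
  ring

theorem lhsTerm_eq_sum_rhsTerm (m n : ℕ) :
    lhsTerm (m, n) = ∑ k ∈ range (min m n + 1), rhsTerm (m - k, k, n - k) := by
  rw [← mul_one (lhsTerm (m, n)), ← sum_range_min_qRankCount q m n, mul_sum]
  refine sum_congr rfl fun k hk ↦ ?_
  obtain ⟨a, rfl⟩ : ∃ a, m = k + a := ⟨m - k, by grind⟩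
  obtain ⟨b, rfl⟩ : ∃ b, n = k + b := ⟨n - k, by grind⟩
  simp only [Nat.add_sub_cancel_left, lhsTerm_mul_qRankCount]

def xyDegree (t : ℕ × ℕ × ℕ) : ℕ × ℕ := (t.1 + t.2.1, t.2.1 + t.2.2)

def xyDegreeFiberEquiv (m n : ℕ) : {t // xyDegree t = (m, n)} ≃ range (min m n + 1) where
  toFun t := ⟨t.1.2.1, by grind [xyDegree]⟩
  invFun k := ⟨(m - k, k, n - k), by grind [xyDegree]⟩
  left_inv t := by grind [xyDegree]
  right_inv k := rfl

theorem tsum_xyDegree_fiber_rhsTerm (m n : ℕ) :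
    ∑' t : {t // xyDegree t = (m, n)}, rhsTerm t =
      ∑ k ∈ range (min m n + 1), rhsTerm (m - k, k, n - k) := by
  rw [← (xyDegreeFiberEquiv m n).symm.tsum_eq]
  exact Finset.tsum_subtype _ fun k ↦ rhsTerm (m - k, k, n - k)

theorem rhsTerm_eq_monomial_mul (t : ℕ × ℕ × ℕ) :
    rhsTerm t = monomial (Finsupp.single 1 (xyDegree t).1 + Finsupp.single 2 (xyDegree t).2) 1 *
      (q ^ (t.1 ^ 2 + t.2.1 ^ 2 + t.2.2 ^ 2 + t.1 * t.2.1 + t.2.1 * t.2.2) *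
        (qPoch t.1 * qPoch t.2.1 * qPoch t.2.2)⁻¹) := by
  rw [← mul_one (1 : ℚ), ← monomial_mul_monomial, ← X_pow_eq, ← X_pow_eq, rhsTerm, x, y,
    xyDegree]
  ring

theorem summable_rhsTerm : Summable rhsTerm := by
  have bounded (d : Fin 3 →₀ ℕ) : {t : ℕ × ℕ × ℕ |
      Finsupp.single 1 (xyDegree t).1 + Finsupp.single 2 (xyDegree t).2 ≤ d}.Finite := by
    refine (range (d 1 + 1) ×ˢ range (d 1 + 1) ×ˢ range (d 2 + 1)).finite_toSet.subset ?_
    intro t ht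
    have h1 := Finsupp.le_def.mp ht 1
    have h2 := Finsupp.le_def.mp ht 2
    simp [xyDegree] at h1 h2 ⊢
    omega
  simp only [funext rhsTerm_eq_monomial_mul]
  exact MvPowerSeries.summable_monomial_mul bounded _

/-- Feigin–Stoyanovsky character identity for the level one principal subspace of `sl₃`:
`∑_{m,n ≥ 0} q^{m²+n²-mn} x^m y^n / ((q)_m (q)_n)
  = ∑_{n₁,n₂,n₃ ≥ 0} x^{n₁+n₂} y^{n₂+n₃} q^{n₁²+n₂²+n₃²+n₁n₂+n₂n₃} / ((q)_{n₁}(q)_{n₂}(q)_{n₃})`. -/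
theorem sl3_principal_subspace_identity :
    (∑' p : ℕ × ℕ,
      q ^ (p.1 ^ 2 + p.2 ^ 2 - p.1 * p.2) * x ^ p.1 * y ^ p.2 *
        (qPoch p.1 * qPoch p.2)⁻¹) =
    ∑' t : ℕ × ℕ × ℕ,
      x ^ (t.1 + t.2.1) * y ^ (t.2.1 + t.2.2) *
        q ^ (t.1 ^ 2 + t.2.1 ^ 2 + t.2.2 ^ 2 + t.1 * t.2.1 + t.2.1 * t.2.2) *
        (qPoch t.1 * qPoch t.2.1 * qPoch t.2.2)⁻¹ := calc
  ∑' p, lhsTerm p = ∑' p : ℕ × ℕ, ∑' t : {t // xyDegree t = p}, rhsTerm t :=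
    tsum_congr fun ⟨m, n⟩ ↦ by rw [tsum_xyDegree_fiber_rhsTerm, lhsTerm_eq_sum_rhsTerm]
  _ = ∑' t, rhsTerm t :=
    (summable_rhsTerm.tsum_fiberwise xyDegree fun ⟨m, n⟩ ↦
      Finite.of_equiv _ (xyDegreeFiberEquiv m n).symm).symm
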